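/- arXiv:1004.2269 — 4 statements merged into one kernel-verified Lean document; each statement's English description precedes it below -/
import Mathlib

section
/- For every positive integer n, ∏_{r=1}^{n} h(r) = n! / (⌊n/2⌋! · ⌊n/4⌋! · ⌊n/8⌋! ···), where the product in the denominator runs over ⌊n/2^i⌋! for i = 1, 2, 3, … and is finite since ⌊n/2^i⌋ = 0 for all sufficiently large i. -/
open Finset

/-- `g x = x` if `x` is an integer (for positive rationals: a positive integer), else `1`. -/
def g (x : ℚ) : ℚ := if x.den = 1 then x else 1

/-- `h r = r / (g(r/2) * g(r/4) * g(r/8) * ...)`; the product is finite since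
`g (r / 2^i) = 1` for all `i > r`. -/
def h (r : ℕ) : ℚ := (r : ℚ) / ∏ i ∈ Finset.Icc 1 r, g ((r : ℚ) / 2 ^ i)

/-- `f (2^k * ℓ) = ℓ^(1-k)` for `ℓ` odd, i.e. `f r = odd(r) ^ (1 - v₂(r))`. -/
def f (r : ℕ) : ℚ := (ordCompl[2] r : ℚ) ^ ((1 : ℤ) - padicValNat 2 r)

open Nat

/-!
Since `g (r / 2^i)` is `r / 2^i` when `2^i ∣ r` and `1` otherwise, exchanging the two products
turns the denominator of `∏ h r` into `∏ᵢ ∏_{r ≤ n, 2^i ∣ r} r / 2^i`, and the inner product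
runs over `1, 2, …, ⌊n / 2^i⌋`.
-/

lemma g_natCast_div (r d : ℕ) (hd : d ≠ 0) :
    g ((r : ℚ) / d) = ((if d ∣ r then r / d else 1 : ℕ) : ℚ) := by
  simp only [g, Rat.den_div_natCast_eq_one_iff r d hd]
  split_ifs with hdvd
  · rw [Nat.cast_div hdvd (Nat.cast_ne_zero.mpr hd)]
  · rw [Nat.cast_one]

lemma g_natCast_div_two_pow_of_lt {r i : ℕ} (hr : 0 < r) (hri : r < i) :
    g ((r : ℚ) / 2 ^ i) = 1 := by
  have hndvd : ¬ 2 ^ i ∣ r := fun hdvd ↦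
    hr.ne' (Nat.eq_zero_of_dvd_of_lt hdvd (hri.trans i.lt_two_pow_self))
  simpa [hndvd] using g_natCast_div r (2 ^ i) (by positivity)

lemma h_eq_div_prod_Icc {r n : ℕ} (hrn : r ≤ n) :
    h r = r / ∏ i ∈ Icc 1 n, g ((r : ℚ) / 2 ^ i) := by
  rcases r.eq_zero_or_pos with rfl | hr
  · simp [h]
  refine congrArg _ (prod_subset (Icc_subset_Icc_right hrn) fun i _ hir ↦ ?_)
  exact g_natCast_div_two_pow_of_lt hr (by simp_all)

lemma prod_Icc_ite_dvd_div (n d : ℕ) :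
    ∏ r ∈ Icc 1 n, (if d ∣ r then r / d else 1) = (n / d)! := by
  induction n with
  | zero => simp
  | succ n ih =>
    rw [prod_Icc_succ_top (by omega), ih]
    by_cases hdvd : d ∣ n + 1
    · rw [if_pos hdvd, Nat.succ_div_of_dvd hdvd, Nat.factorial_succ, mul_comm]
    · rw [if_neg hdvd, Nat.succ_div_of_not_dvd hdvd, mul_one]

lemma prod_Icc_g_natCast_div_two_pow (n i : ℕ) :
    ∏ r ∈ Icc 1 n, g ((r : ℚ) / 2 ^ i) = ((n / 2 ^ i)! : ℚ) := by
  have h2i : (2 : ℚ) ^ i = ((2 ^ i : ℕ) : ℚ) := by push_cast; rfl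
  simp_rw [h2i, g_natCast_div _ _ (by positivity : 2 ^ i ≠ 0)]
  rw [← Nat.cast_prod, prod_Icc_ite_dvd_div]

theorem prod_h_eq_factorial_ratio_general (n : ℕ) :
    ∏ r ∈ Finset.Icc 1 n, h r
      = (n.factorial : ℚ) / ∏ i ∈ Finset.Icc 1 n, ((n / 2 ^ i).factorial : ℚ) := by
  have hnum : ∏ r ∈ Icc 1 n, (r : ℚ) = n ! := by
    rw [← Nat.cast_prod, ← Ico_add_one_right_eq_Icc, prod_Ico_id_eq_factorial]
  calc ∏ r ∈ Icc 1 n, h r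
      = ∏ r ∈ Icc 1 n, (r : ℚ) / ∏ i ∈ Icc 1 n, g ((r : ℚ) / 2 ^ i) :=
        prod_congr rfl fun r hr ↦ h_eq_div_prod_Icc (mem_Icc.mp hr).2
    _ = (∏ r ∈ Icc 1 n, (r : ℚ)) / ∏ i ∈ Icc 1 n, ∏ r ∈ Icc 1 n, g ((r : ℚ) / 2 ^ i) := by
        rw [prod_div_distrib, prod_comm]
    _ = n ! / ∏ i ∈ Icc 1 n, ((n / 2 ^ i)! : ℚ) := by
        simp_rw [hnum, prod_Icc_g_natCast_div_two_pow]

theorem prod_h_eq_factorial_ratio (n : ℕ) (hn : 0 < n) :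
    ∏ r ∈ Finset.Icc 1 n, h r
      = (n.factorial : ℚ) / ∏ i ∈ Finset.Icc 1 n, ((n / 2 ^ i).factorial : ℚ) :=
  prod_h_eq_factorial_ratio_general n
end

section
/- The sequence (∏_{r=1}^{n} h(r))^{1/n} converges to 4 as n → ∞. -/
open Finset

/-!
With `D n = ⌊n/2⌋! ⌊n/4⌋! ⋯`, the product is `n! / D n`, and `D n = ⌊n/2⌋! · D ⌊n/2⌋` gives
`n! / D n = (n! / ⌊n/2⌋!²) · (⌊n/2⌋! / D ⌊n/2⌋)`. The first factor is the central binomial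
coefficient up to a factor `n + 1`, hence `2^n` up to a factor `n + 1`. Unfolding the `log₂ n`
halvings, `n! / D n` is `2 ^ (n + ⌊n/2⌋ + ⌊n/4⌋ + ⋯) = 4 ^ n · 2 ^ (-O(log n))` up to a factor
`(2n + 2) ^ (log₂ n + 1) = exp (O(log² n))`, which disappears under the `n`-th root.
-/

open Filter Topology
open scoped Nat

lemma g_natCast_div_two_pow (m i : ℕ) :
    g ((m : ℚ) / 2 ^ i) = ((if 2 ^ i ∣ m then m / 2 ^ i else 1 : ℕ) : ℚ) := by
  have hcast : ((m : ℚ) / 2 ^ i) = (m : ℚ) / ((2 ^ i : ℕ) : ℚ) := by push_cast; rfl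
  simp only [g, hcast, Rat.den_div_natCast_eq_one_iff _ _ (pow_ne_zero i two_ne_zero)]
  split_ifs with hdvd
  · rw [Nat.cast_div hdvd (by positivity)]
  · rfl

def hDenom (r : ℕ) : ℕ := ∏ i ∈ range r, if 2 ^ (i + 1) ∣ r then r / 2 ^ (i + 1) else 1

lemma h_eq_div_hDenom (r : ℕ) : h r = r / hDenom r := by
  rw [h, hDenom, ← Ico_add_one_right_eq_Icc, prod_Ico_eq_prod_range, Nat.cast_prod]
  simp only [add_tsub_cancel_right, g_natCast_div_two_pow, add_comm 1]

def halvingFactorialProd (n : ℕ) : ℕ := ∏ i ∈ range n, (n / 2 ^ (i + 1))!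

lemma halvingFactorialProd_pos (n : ℕ) : 0 < halvingFactorialProd n :=
  prod_pos fun _ _ => Nat.factorial_pos _

lemma prod_range_factorial_div_two_pow_eq {n N : ℕ} (hN : n ≤ N) :
    ∏ i ∈ range N, (n / 2 ^ (i + 1))! = halvingFactorialProd n := by
  refine (prod_subset (range_subset_range.mpr hN) fun i _ hi => ?_).symm
  have hlt : n < 2 ^ (i + 1) :=
    (Nat.lt_two_pow_self).trans_le (Nat.pow_le_pow_right two_pos (by simp at hi; omega))
  rw [Nat.div_eq_of_lt hlt, Nat.factorial_zero]

lemma halvingFactorialProd_eq (n : ℕ) :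
    halvingFactorialProd n = (n / 2)! * halvingFactorialProd (n / 2) := by
  rw [← prod_range_factorial_div_two_pow_eq (Nat.le_succ n), prod_range_succ',
    ← prod_range_factorial_div_two_pow_eq (Nat.div_le_self n 2), mul_comm]
  simp only [Nat.div_div_eq_div_mul, ← pow_succ', zero_add, pow_one]

lemma halvingFactorialProd_succ (n : ℕ) :
    halvingFactorialProd (n + 1) = halvingFactorialProd n * hDenom (n + 1) := by
  rw [halvingFactorialProd, hDenom, ← prod_range_factorial_div_two_pow_eq (Nat.le_succ n),
    ← prod_mul_distrib]
  refine prod_congr rfl fun i _ => ?_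
  rw [Nat.succ_div]
  split_ifs
  · rw [Nat.factorial_succ, mul_comm]
  · rw [add_zero, mul_one]

lemma prod_h_eq_factorial_div (n : ℕ) :
    ∏ r ∈ Icc 1 n, h r = (n ! : ℚ) / halvingFactorialProd n := by
  induction n with
  | zero => simp [halvingFactorialProd]
  | succ n ih =>
    rw [prod_Icc_succ_top (Nat.le_add_left 1 n), ih, h_eq_div_hDenom, div_mul_div_comm,
      halvingFactorialProd_succ, Nat.factorial_succ]
    push_cast
    ring

lemma two_pow_le_succ_mul_choose_half (n : ℕ) : 2 ^ n ≤ (n + 1) * n.choose (n / 2) :=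
  calc 2 ^ n = ∑ i ∈ range (n + 1), n.choose i := (Nat.sum_range_choose n).symm
    _ ≤ ∑ _i ∈ range (n + 1), n.choose (n / 2) := sum_le_sum fun i _ => Nat.choose_le_middle i n
    _ = (n + 1) * n.choose (n / 2) := by rw [sum_const, card_range, smul_eq_mul]

lemma two_pow_mul_factorial_half_sq_le (n : ℕ) : 2 ^ n * (n / 2)! ^ 2 ≤ (n + 1) * n ! := by
  have hfac : (n / 2)! ≤ (n - n / 2)! := Nat.factorial_le (by omega)
  calc 2 ^ n * (n / 2)! ^ 2 ≤ (n + 1) * n.choose (n / 2) * ((n / 2)! * (n - n / 2)!) := by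
        rw [sq]; gcongr; exact two_pow_le_succ_mul_choose_half n
    _ = (n + 1) * n ! := by
        rw [← Nat.choose_mul_factorial_mul_factorial (Nat.div_le_self n 2)]; ring

lemma factorial_le_succ_mul_two_pow_mul_factorial_half_sq (n : ℕ) :
    n ! ≤ (n + 1) * 2 ^ n * (n / 2)! ^ 2 := by
  have hfac : (n - n / 2)! ≤ (n + 1) * (n / 2)! :=
    calc (n - n / 2)! ≤ (n / 2 + 1)! := Nat.factorial_le (by omega)
      _ ≤ (n + 1) * (n / 2)! := by rw [Nat.factorial_succ]; gcongr; omega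
  calc n ! = n.choose (n / 2) * (n / 2)! * (n - n / 2)! :=
        (Nat.choose_mul_factorial_mul_factorial (Nat.div_le_self n 2)).symm
    _ ≤ 2 ^ n * (n / 2)! * ((n + 1) * (n / 2)!) := by
        gcongr
        exact Nat.choose_le_two_pow n _
    _ = (n + 1) * 2 ^ n * (n / 2)! ^ 2 := by ring

def subexpBound (n : ℕ) : ℕ := (2 * n + 2) ^ (Nat.log 2 n + 1)

lemma two_mul_succ_mul_subexpBound_half_le {n : ℕ} (hn : 2 ≤ n) :
    2 * (n + 1) * subexpBound (n / 2) ≤ subexpBound n := by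
  have hlog : Nat.log 2 (n / 2) + 1 = Nat.log 2 n := by
    rw [Nat.log_div_base]
    have := Nat.log_pos one_lt_two hn
    omega
  rw [subexpBound, subexpBound, ← hlog, pow_succ' (2 * n + 2)]
  gcongr <;> omega

lemma factorial_div_halvingFactorialProd_eq (n : ℕ) :
    (n ! : ℝ) / halvingFactorialProd n =
      n ! / ((n / 2)! ^ 2 : ℕ) * ((n / 2)! / halvingFactorialProd (n / 2)) := by
  have := halvingFactorialProd_pos (n / 2)
  rw [halvingFactorialProd_eq]
  push_cast
  field_simp

lemma le_subexpBound_mul_four_pow (n : ℕ) :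
    (n ! : ℝ) / halvingFactorialProd n ≤ subexpBound n * 4 ^ n := by
  induction n using Nat.strong_induction_on with
  | _ n ih =>
  by_cases hn : n < 2
  · interval_cases n <;> norm_num [halvingFactorialProd, subexpBound]
  have hratio : (n ! : ℝ) / ((n / 2)! ^ 2 : ℕ) ≤ (n + 1) * 2 ^ n := by
    rw [div_le_iff₀ (by positivity)]
    exact_mod_cast factorial_le_succ_mul_two_pow_mul_factorial_half_sq n
  have hpow : (2 : ℝ) ^ n * 4 ^ (n / 2) ≤ 4 ^ n := by
    rw [show (4 : ℝ) = 2 ^ 2 by norm_num, ← pow_mul, ← pow_mul, ← pow_add]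
    exact pow_le_pow_right₀ one_le_two (by omega)
  have hbound : ((n : ℝ) + 1) * subexpBound (n / 2) ≤ subexpBound n := by
    have := two_mul_succ_mul_subexpBound_half_le (not_lt.mp hn)
    calc ((n : ℝ) + 1) * subexpBound (n / 2) ≤ 2 * (n + 1) * subexpBound (n / 2) := by
          gcongr; linarith
      _ ≤ subexpBound n := by exact_mod_cast this
  rw [factorial_div_halvingFactorialProd_eq]
  calc (n ! : ℝ) / ((n / 2)! ^ 2 : ℕ) * ((n / 2)! / halvingFactorialProd (n / 2))
      ≤ ((n + 1) * 2 ^ n) * (subexpBound (n / 2) * 4 ^ (n / 2)) := by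
        gcongr
        exact ih _ (by omega)
    _ = ((n + 1) * subexpBound (n / 2)) * (2 ^ n * 4 ^ (n / 2)) := by ring
    _ ≤ subexpBound n * 4 ^ n := by gcongr

lemma four_pow_le_subexpBound_mul (n : ℕ) :
    (4 : ℝ) ^ n ≤ subexpBound n * (n ! / halvingFactorialProd n) := by
  induction n using Nat.strong_induction_on with
  | _ n ih =>
  by_cases hn : n < 2
  · interval_cases n <;> norm_num [halvingFactorialProd, subexpBound]
  have hratio : (2 : ℝ) ^ n ≤ (n + 1) * (n ! / ((n / 2)! ^ 2 : ℕ)) := by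
    rw [mul_div_assoc', le_div_iff₀ (by positivity)]
    exact_mod_cast two_pow_mul_factorial_half_sq_le n
  have hpow : (4 : ℝ) ^ n ≤ 2 * (2 ^ n * 4 ^ (n / 2)) := by
    rw [show (4 : ℝ) = 2 ^ 2 by norm_num, ← pow_mul, ← pow_mul, ← pow_add, ← pow_succ']
    exact pow_le_pow_right₀ one_le_two (by omega)
  have hbound : (2 : ℝ) * (n + 1) * subexpBound (n / 2) ≤ subexpBound n := by
    exact_mod_cast two_mul_succ_mul_subexpBound_half_le (not_lt.mp hn)
  rw [factorial_div_halvingFactorialProd_eq]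
  calc (4 : ℝ) ^ n ≤ 2 * (2 ^ n * 4 ^ (n / 2)) := hpow
    _ ≤ 2 * (((n + 1) * (n ! / ((n / 2)! ^ 2 : ℕ))) *
          (subexpBound (n / 2) * ((n / 2)! / halvingFactorialProd (n / 2)))) := by
        gcongr
        exact ih _ (by omega)
    _ = (2 * (n + 1) * subexpBound (n / 2)) *
          (n ! / ((n / 2)! ^ 2 : ℕ) * ((n / 2)! / halvingFactorialProd (n / 2))) := by ring
    _ ≤ subexpBound n *
          (n ! / ((n / 2)! ^ 2 : ℕ) * ((n / 2)! / halvingFactorialProd (n / 2))) := by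
        gcongr

lemma tendsto_rpow_inv_of_le_mul_pow {a : ℝ} (ha : 0 ≤ a) {u c : ℕ → ℝ} (hu : ∀ n, 0 ≤ u n)
    (hc : ∀ n, 0 ≤ c n) (hc_lim : Tendsto (fun n => c n ^ (n : ℝ)⁻¹) atTop (𝓝 1))
    (hlow : ∀ n, a ^ n ≤ c n * u n) (hup : ∀ n, u n ≤ c n * a ^ n) :
    Tendsto (fun n => u n ^ (n : ℝ)⁻¹) atTop (𝓝 a) := by
  refine tendsto_of_tendsto_of_tendsto_of_le_of_le' (g := fun n => a / c n ^ (n : ℝ)⁻¹)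
    (h := fun n => c n ^ (n : ℝ)⁻¹ * a) ?_ ?_ ?_ ?_
  · simpa [div_eq_mul_inv] using tendsto_const_nhds.mul (hc_lim.inv₀ one_ne_zero)
  · simpa using hc_lim.mul_const a
  · filter_upwards [eventually_ne_atTop 0] with n hn
    refine div_le_of_le_mul₀ (Real.rpow_nonneg (hc n) _) (Real.rpow_nonneg (hu n) _) ?_
    calc a = (a ^ n) ^ (n : ℝ)⁻¹ := (Real.pow_rpow_inv_natCast ha hn).symm
      _ ≤ (c n * u n) ^ (n : ℝ)⁻¹ := Real.rpow_le_rpow (by positivity) (hlow n) (by positivity)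
      _ = u n ^ (n : ℝ)⁻¹ * c n ^ (n : ℝ)⁻¹ := by rw [Real.mul_rpow (hc n) (hu n), mul_comm]
  · filter_upwards [eventually_ne_atTop 0] with n hn
    calc u n ^ (n : ℝ)⁻¹ ≤ (c n * a ^ n) ^ (n : ℝ)⁻¹ :=
          Real.rpow_le_rpow (hu n) (hup n) (by positivity)
      _ = c n ^ (n : ℝ)⁻¹ * a := by
          rw [Real.mul_rpow (hc n) (by positivity), Real.pow_rpow_inv_natCast ha hn]

lemma two_pow_log_succ_le (n : ℕ) : 2 ^ (Nat.log 2 n + 1) ≤ 2 * n + 2 := by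
  rw [pow_succ, mul_comm]
  have := Nat.pow_log_le_add_one 2 n
  omega

lemma log_subexpBound_le (n : ℕ) :
    Real.log (subexpBound n) ≤ Real.log (2 * n + 2) ^ 2 / Real.log 2 := by
  have hL : ((Nat.log 2 n + 1 : ℕ) : ℝ) * Real.log 2 ≤ Real.log (2 * n + 2) := by
    rw [← Real.log_pow]
    exact Real.log_le_log (by positivity) (by exact_mod_cast two_pow_log_succ_le n)
  rw [subexpBound, Nat.cast_pow, Real.log_pow, le_div_iff₀ (Real.log_pos one_lt_two), sq]
  push_cast at hL ⊢
  have : 0 ≤ Real.log (2 * n + 2) := Real.log_nonneg (by linarith [(n.cast_nonneg : (0:ℝ) ≤ n)])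
  nlinarith

lemma tendsto_subexpBound_rpow_inv :
    Tendsto (fun n : ℕ => (subexpBound n : ℝ) ^ (n : ℝ)⁻¹) atTop (𝓝 1) := by
  have hx : Tendsto (fun n : ℕ => 2 * (n : ℝ) + 2) atTop atTop :=
    tendsto_atTop_add_const_right _ 2 (tendsto_natCast_atTop_atTop.const_mul_atTop two_pos)
  have hlog_sq : Tendsto (fun n : ℕ => 4 / Real.log 2 * (Real.log (2 * n + 2) ^ 2 / (2 * n + 2)))
      atTop (𝓝 0) := by
    simpa using ((Real.tendsto_pow_log_div_mul_add_atTop 1 0 2 one_ne_zero).comp hx).const_mul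
      (4 / Real.log 2)
  have hlog : Tendsto (fun n : ℕ => Real.log (subexpBound n) * (n : ℝ)⁻¹) atTop (𝓝 0) := by
    refine squeeze_zero' ?_ ?_ hlog_sq
    · filter_upwards with n
      have : (1 : ℝ) ≤ subexpBound n := by
        exact_mod_cast Nat.one_le_pow _ _ (by omega)
      exact mul_nonneg (Real.log_nonneg this) (by positivity)
    · filter_upwards [eventually_ge_atTop 1] with n hn
      have hn' : (1 : ℝ) ≤ n := by exact_mod_cast hn
      have hinv : (n : ℝ)⁻¹ ≤ 4 / (2 * n + 2) := by
        rw [inv_eq_one_div, div_le_div_iff₀ (by positivity) (by positivity)]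
        linarith
      calc Real.log (subexpBound n) * (n : ℝ)⁻¹
          ≤ Real.log (2 * n + 2) ^ 2 / Real.log 2 * (4 / (2 * n + 2)) :=
            mul_le_mul (log_subexpBound_le n) hinv (by positivity)
              (div_nonneg (sq_nonneg _) (Real.log_nonneg one_le_two))
        _ = 4 / Real.log 2 * (Real.log (2 * n + 2) ^ 2 / (2 * n + 2)) := by ring
  have hpos (n : ℕ) : (0 : ℝ) < subexpBound n := by
    rw [subexpBound]; positivity
  simpa [Function.comp_def, Real.rpow_def_of_pos (hpos _)] using
    (Real.continuous_exp.tendsto 0).comp hlog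

theorem prod_h_pow_inv_tendsto_four :
    Filter.Tendsto (fun n : ℕ => ((∏ r ∈ Finset.Icc 1 n, h r : ℚ) : ℝ) ^ ((n : ℝ)⁻¹))
      Filter.atTop (nhds 4) := by
  have hprod (n : ℕ) : ((∏ r ∈ Icc 1 n, h r : ℚ) : ℝ) = n ! / halvingFactorialProd n := by
    rw [prod_h_eq_factorial_div]
    push_cast
    rfl
  simp only [hprod]
  exact tendsto_rpow_inv_of_le_mul_pow zero_le_four (fun n => by positivity)
    (fun n => by positivity) tendsto_subexpBound_rpow_inv four_pow_le_subexpBound_mul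
    le_subexpBound_mul_four_pow
end

section
/- The sequence (∏_{r=1}^{n} f(r))^{1/n} converges to 4 as n → ∞. -/
open Finset

/-!
Let `P n = ∏_{r ≤ n} f r`. The odd `r ≤ 2m` contribute `(2m)! / (2^m m!)` and
`f (2r) = f r / odd(r)`, so by Legendre's formula `P (2m) * 2 ^ s(m) = P m * (2m choose m)`, where
`s(m)` is the binary digit sum. As `4^m / (2m+1) ≤ (2m choose m) ≤ 4^m` and `1 ≤ 2 ^ s(m) ≤ m + 1`,
`P n` agrees with `4 ^ ⌈n/2⌉ * P ⌊n/2⌋` up to a factor `(n+1)^(±2)`. Iterating over the `log₂ n`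
halvings gives `log P n = n log 4 + O(log² n)`.
-/

open Filter Topology Real

theorem Nat.sum_digits_succ_add_sub_one_mul_padicValNat (p : ℕ) [Fact p.Prime] (n : ℕ) :
    (p.digits (n + 1)).sum + (p - 1) * padicValNat p (n + 1) = (p.digits n).sum + 1 := by
  have hn := sub_one_mul_padicValNat_factorial (p := p) n
  have hn1 := sub_one_mul_padicValNat_factorial (p := p) (n + 1)
  rw [Nat.factorial_succ, padicValNat.mul (by positivity) (Nat.factorial_ne_zero n), mul_add,
    add_comm] at hn1
  have := Nat.digit_sum_le p n
  have := Nat.digit_sum_le p (n + 1)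
  omega

theorem Nat.two_pow_sum_digits_two_le (n : ℕ) : 2 ^ (Nat.digits 2 n).sum ≤ n + 1 := by
  induction n using Nat.strong_induction_on with
  | _ n ih =>
    rcases Nat.eq_zero_or_pos n with rfl | hn
    · simp
    have := ih (n / 2) (Nat.div_lt_self hn one_lt_two)
    rw [Nat.digits_def' one_lt_two hn, List.sum_cons, pow_add]
    rcases Nat.mod_two_eq_zero_or_one n with h | h <;> rw [h] <;> omega

-- Under the cast to `ℚ`, `ordCompl[2] r` elaborates as a (still exact) division in `ℚ`.
theorem f_eq (r : ℕ) :
    f r = ((r : ℚ) / 2 ^ padicValNat 2 r) ^ ((1 : ℤ) - padicValNat 2 r) := by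
  rw [f, Nat.factorization_def _ Nat.prime_two]

theorem f_two_mul_add_one (m : ℕ) : f (2 * m + 1) = 2 * m + 1 := by
  have hv : padicValNat 2 (2 * m + 1) = 0 := padicValNat.eq_zero_of_not_dvd (by omega)
  simp [f_eq, hv]

theorem f_two_mul_mul (r : ℕ) : f (2 * r) * ((r : ℚ) / 2 ^ padicValNat 2 r) = f r := by
  rcases eq_or_ne r 0 with rfl | hr
  · simp [f_eq]
  have hv : padicValNat 2 (2 * r) = padicValNat 2 r + 1 := by
    rw [padicValNat.mul two_ne_zero hr, padicValNat.self one_lt_two, add_comm]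
  have ho : ((2 * r : ℕ) : ℚ) / 2 ^ padicValNat 2 (2 * r) = (r : ℚ) / 2 ^ padicValNat 2 r := by
    rw [hv, pow_succ]; push_cast; field_simp
  have ho0 : (r : ℚ) / 2 ^ padicValNat 2 r ≠ 0 := by positivity
  rw [f_eq, f_eq, ho, hv, ← zpow_add_one₀ ho0]
  congr 1
  push_cast
  ring

def fProd (n : ℕ) : ℚ := ∏ r ∈ Icc 1 n, f r

theorem fProd_succ (n : ℕ) : fProd (n + 1) = fProd n * f (n + 1) :=
  prod_Icc_succ_top (by omega) f

theorem fProd_pos (n : ℕ) : 0 < fProd n :=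
  prod_pos fun r hr => by
    have : 0 < r := (mem_Icc.mp hr).1
    rw [f_eq]; positivity

theorem fProd_two_mul_mul_two_pow_sum_digits (m : ℕ) :
    fProd (2 * m) * 2 ^ (Nat.digits 2 m).sum = fProd m * m.centralBinom := by
  induction m with
  | zero => simp [fProd]
  | succ m ih =>
    have hP : fProd (2 * (m + 1)) = fProd (2 * m) * (2 * m + 1) * f (2 * (m + 1)) := by
      rw [show 2 * (m + 1) = 2 * m + 1 + 1 by ring, fProd_succ, fProd_succ, f_two_mul_add_one]
    set o : ℚ := ((m + 1 : ℕ) : ℚ) / 2 ^ padicValNat 2 (m + 1)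
    have ho : o * 2 ^ padicValNat 2 (m + 1) = (m + 1 : ℕ) := div_mul_cancel₀ _ (by positivity)
    have hs : (2 : ℚ) ^ (Nat.digits 2 (m + 1)).sum * 2 ^ padicValNat 2 (m + 1) =
        2 ^ (Nat.digits 2 m).sum * 2 := by
      rw [← pow_add, ← pow_succ]
      simpa using Nat.sum_digits_succ_add_sub_one_mul_padicValNat 2 m
    have hC : ((m + 1 : ℕ) : ℚ) * (m + 1).centralBinom = 2 * (2 * m + 1) * m.centralBinom := by
      exact_mod_cast Nat.succ_mul_centralBinom_succ m
    -- `m + 1 = odd(m + 1) * 2 ^ v₂(m + 1)`: the odd part feeds `f_two_mul_mul`, the power `hs`.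
    refine mul_right_cancel₀ (b := ((m + 1 : ℕ) : ℚ)) (by positivity) ?_
    calc fProd (2 * (m + 1)) * 2 ^ (Nat.digits 2 (m + 1)).sum * ((m + 1 : ℕ) : ℚ)
        = fProd (2 * m) * (2 * m + 1) * (f (2 * (m + 1)) * o) *
            (2 ^ (Nat.digits 2 (m + 1)).sum * 2 ^ padicValNat 2 (m + 1)) := by
          rw [hP, ← ho]; ring
      _ = 2 * (2 * m + 1) * f (m + 1) * (fProd (2 * m) * 2 ^ (Nat.digits 2 m).sum) := by
          rw [f_two_mul_mul, hs]; ring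
      _ = fProd m * f (m + 1) * (2 * (2 * m + 1) * m.centralBinom) := by rw [ih]; ring
      _ = fProd (m + 1) * (m + 1).centralBinom * ((m + 1 : ℕ) : ℚ) := by
          rw [fProd_succ, ← hC]; ring

theorem fProd_two_mul_le (m : ℕ) : fProd (2 * m) ≤ 4 ^ m * fProd m := by
  have hC : (m.centralBinom : ℚ) ≤ 4 ^ m := by exact_mod_cast Nat.centralBinom_le_four_pow m
  calc fProd (2 * m) ≤ fProd (2 * m) * 2 ^ (Nat.digits 2 m).sum :=
        le_mul_of_one_le_right (fProd_pos _).le (one_le_pow₀ one_le_two)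
    _ = m.centralBinom * fProd m := by rw [fProd_two_mul_mul_two_pow_sum_digits, mul_comm]
    _ ≤ 4 ^ m * fProd m := mul_le_mul_of_nonneg_right hC (fProd_pos m).le

theorem four_pow_mul_fProd_le (m : ℕ) :
    4 ^ m * fProd m ≤ (2 * m + 1) * (m + 1) * fProd (2 * m) := by
  have hs : (2 : ℚ) ^ (Nat.digits 2 m).sum ≤ m + 1 := by
    exact_mod_cast Nat.two_pow_sum_digits_two_le m
  have hC : (4 : ℚ) ^ m ≤ (2 * m + 1) * m.centralBinom := by
    exact_mod_cast Nat.four_pow_le_two_mul_add_one_mul_central_binom m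
  calc 4 ^ m * fProd m ≤ (2 * m + 1) * m.centralBinom * fProd m :=
        mul_le_mul_of_nonneg_right hC (fProd_pos m).le
    _ = (2 * m + 1) * fProd (2 * m) * 2 ^ (Nat.digits 2 m).sum := by
        rw [mul_assoc _ (fProd _), fProd_two_mul_mul_two_pow_sum_digits]; ring
    _ ≤ (2 * m + 1) * fProd (2 * m) * (m + 1) :=
        mul_le_mul_of_nonneg_left hs (mul_pos (by positivity) (fProd_pos _)).le
    _ = (2 * m + 1) * (m + 1) * fProd (2 * m) := by ring

theorem fProd_le_mul_fProd_div_two (n : ℕ) :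
    fProd n ≤ (n + 1) ^ 2 * (4 ^ (n - n / 2) * fProd (n / 2)) := by
  obtain ⟨m, rfl | rfl⟩ := Nat.even_or_odd' n
  · rw [show 2 * m / 2 = m by omega, show 2 * m - m = m by omega]
    refine (fProd_two_mul_le m).trans (le_mul_of_one_le_left ?_ ?_)
    · exact (mul_pos (by positivity) (fProd_pos m)).le
    · exact one_le_pow₀ (by simp)
  · rw [show (2 * m + 1) / 2 = m by omega, show 2 * m + 1 - m = m + 1 by omega, fProd_succ,
      f_two_mul_add_one]
    have hP : 0 ≤ 4 ^ m * fProd m := (mul_pos (by positivity) (fProd_pos m)).le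
    calc fProd (2 * m) * (2 * m + 1) ≤ 4 ^ m * fProd m * (2 * m + 1) :=
          mul_le_mul_of_nonneg_right (fProd_two_mul_le m) (by positivity)
      _ ≤ 4 ^ m * fProd m * (4 * (2 * m + 1 + 1) ^ 2) :=
          mul_le_mul_of_nonneg_left (by nlinarith) hP
      _ = _ := by push_cast; ring

theorem four_pow_mul_fProd_div_two_le (n : ℕ) :
    4 ^ (n - n / 2) * fProd (n / 2) ≤ (n + 1) ^ 2 * fProd n := by
  obtain ⟨m, rfl | rfl⟩ := Nat.even_or_odd' n
  · rw [show 2 * m / 2 = m by omega, show 2 * m - m = m by omega]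
    refine (four_pow_mul_fProd_le m).trans (mul_le_mul_of_nonneg_right ?_ (fProd_pos _).le)
    push_cast
    nlinarith
  · rw [show (2 * m + 1) / 2 = m by omega, show 2 * m + 1 - m = m + 1 by omega, fProd_succ,
      f_two_mul_add_one]
    have hP := (fProd_pos (2 * m)).le
    calc 4 ^ (m + 1) * fProd m = 4 * (4 ^ m * fProd m) := by ring
      _ ≤ 4 * ((2 * m + 1) * (m + 1) * fProd (2 * m)) :=
          mul_le_mul_of_nonneg_left (four_pow_mul_fProd_le m) (by norm_num)
      _ = 4 * (m + 1) * (fProd (2 * m) * (2 * m + 1)) := by ring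
      _ ≤ (2 * m + 1 + 1) ^ 2 * (fProd (2 * m) * (2 * m + 1)) :=
          mul_le_mul_of_nonneg_right (by nlinarith) (by positivity)
      _ = _ := by push_cast; ring

theorem abs_sub_le_of_abs_sub_div_two_le {b ε : ℕ → ℝ} (hε : Monotone ε)
    (h : ∀ n, |b n - b (n / 2)| ≤ ε n) (n : ℕ) : |b n - b 0| ≤ (Nat.log 2 n + 1) * ε n := by
  induction n using Nat.strong_induction_on with
  | _ n ih =>
    have hε0 : 0 ≤ ε (n / 2) := (abs_nonneg _).trans (h _)
    rcases lt_trichotomy n 1 with hn | rfl | hn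
    · obtain rfl : n = 0 := by omega
      simpa using hε0
    · simpa using h 1
    have hlog : Nat.log 2 (n / 2) + 1 = Nat.log 2 n := by
      have := Nat.log_pos one_lt_two (show 2 ≤ n by omega)
      rw [Nat.log_div_base]; omega
    have ih' := ih (n / 2) (by omega)
    rw [← Nat.cast_add_one, hlog] at ih'
    calc |b n - b 0| ≤ |b n - b (n / 2)| + |b (n / 2) - b 0| := abs_sub_le _ _ _
      _ ≤ ε n + Nat.log 2 n * ε n := by
          gcongr
          · exact h n
          · exact ih'.trans (mul_le_mul_of_nonneg_left (hε (Nat.div_le_self n 2)) (by positivity))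
      _ = (Nat.log 2 n + 1) * ε n := by ring

theorem natLog_two_add_one_mul_log_two_le {n : ℕ} (hn : n ≠ 0) :
    (Nat.log 2 n + 1 : ℝ) * log 2 ≤ 2 * log (n + 1) := by
  have h : 2 ^ (Nat.log 2 n + 1) ≤ (n + 1) ^ 2 := by
    have := Nat.pow_log_le_self 2 hn
    rw [pow_succ]; nlinarith
  calc (Nat.log 2 n + 1 : ℝ) * log 2 = log (2 ^ (Nat.log 2 n + 1)) := by
        rw [log_pow]; push_cast; ring
    _ ≤ log ((n + 1) ^ 2) := log_le_log (by positivity) (by exact_mod_cast h)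
    _ = 2 * log (n + 1) := by rw [log_pow]; push_cast; ring

theorem tendsto_log_add_one_sq_div_atTop :
    Tendsto (fun n : ℕ => log (n + 1) ^ 2 / n) atTop (𝓝 0) := by
  have h := (tendsto_pow_log_div_mul_add_atTop 1 (-1) 2 one_ne_zero).comp
    (tendsto_atTop_add_const_right atTop (1 : ℝ) tendsto_natCast_atTop_atTop)
  refine h.congr fun n => ?_
  simp

theorem tendsto_natLog_two_add_one_mul_log_div_atTop :
    Tendsto (fun n : ℕ => (Nat.log 2 n + 1 : ℝ) * log (n + 1) / n) atTop (𝓝 0) := by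
  have hlim := tendsto_log_add_one_sq_div_atTop.const_mul (2 / log 2)
  rw [mul_zero] at hlim
  have hlog (n : ℕ) : 0 ≤ log ((n : ℝ) + 1) := log_nonneg (by linarith [n.cast_nonneg (α := ℝ)])
  refine squeeze_zero' (Eventually.of_forall fun n => by have := hlog n; positivity) ?_ hlim
  filter_upwards [eventually_ne_atTop 0] with n hn
  have := natLog_two_add_one_mul_log_two_le hn
  have := hlog n
  rw [mul_div_assoc', div_mul_eq_mul_div, div_le_div_iff_of_pos_right (by positivity),
    le_div_iff₀ (by positivity)]
  nlinarith

theorem tendsto_div_of_abs_sub_div_two_le {b : ℕ → ℝ} {C : ℝ}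
    (h : ∀ n, |b n - b (n / 2)| ≤ C * log (n + 1)) : Tendsto (fun n => b n / n) atTop (𝓝 0) := by
  have hC : 0 ≤ C := by
    have := (abs_nonneg _).trans (h 1)
    norm_num at this
    exact nonneg_of_mul_nonneg_left this (log_pos one_lt_two)
  have hmono : Monotone fun n : ℕ => C * log (n + 1) := fun m n hmn =>
    mul_le_mul_of_nonneg_left (log_le_log (by positivity) (by gcongr)) hC
  have hb := abs_sub_le_of_abs_sub_div_two_le hmono h
  have h1 : Tendsto (fun n => (b n - b 0) / n) atTop (𝓝 0) := by
    have := tendsto_natLog_two_add_one_mul_log_div_atTop.const_mul C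
    rw [mul_zero] at this
    refine squeeze_zero_norm (fun n => ?_) this
    rw [norm_div, Real.norm_natCast, Real.norm_eq_abs]
    calc |b n - b 0| / n ≤ (Nat.log 2 n + 1) * (C * log (n + 1)) / n := by gcongr; exact hb n
      _ = _ := by ring
  have := h1.add (tendsto_const_div_atTop_nhds_zero_nat (b 0))
  rw [add_zero] at this
  exact this.congr fun n => by rw [← add_div, sub_add_cancel]

theorem Real.abs_log_sub_log_le {x y c : ℝ} (hx : 0 < x) (hy : 0 < y) (hxy : x ≤ c * y)
    (hyx : y ≤ c * x) : |log x - log y| ≤ log c := by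
  have hc : 0 < c := pos_of_mul_pos_left (hx.trans_le hxy) hy.le
  rw [abs_sub_le_iff]
  constructor
  · have := log_le_log hx hxy
    rw [log_mul hc.ne' hy.ne'] at this
    linarith
  · have := log_le_log hy hyx
    rw [log_mul hc.ne' hx.ne'] at this
    linarith

theorem tendsto_rpow_inv_of_le_pow_mul_div_two {a : ℕ → ℝ} {q : ℝ} (k : ℕ) (ha : ∀ n, 0 < a n)
    (hq : 0 < q) (hup : ∀ n, a n ≤ (n + 1) ^ k * (q ^ (n - n / 2) * a (n / 2)))
    (hlow : ∀ n, q ^ (n - n / 2) * a (n / 2) ≤ (n + 1) ^ k * a n) :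
    Tendsto (fun n : ℕ => a n ^ (n : ℝ)⁻¹) atTop (𝓝 q) := by
  have hstep (n : ℕ) :
      |(log (a n) - n * log q) - (log (a (n / 2)) - (n / 2 : ℕ) * log q)| ≤ k * log (n + 1) := by
    have := Real.abs_log_sub_log_le (ha n) (by have := ha (n / 2); positivity) (hup n) (hlow n)
    rw [log_mul (by positivity) (ha _).ne', log_pow, log_pow,
      Nat.cast_sub (Nat.div_le_self n 2)] at this
    convert this using 2
    ring
  have hlog : Tendsto (fun n : ℕ => log (a n) / n) atTop (𝓝 (log q)) := by
    have := (tendsto_div_of_abs_sub_div_two_le hstep).const_add (log q)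
    rw [add_zero] at this
    refine this.congr' ?_
    filter_upwards [eventually_ne_atTop 0] with n hn
    field_simp
    ring
  have := (continuous_exp.tendsto _).comp hlog
  rw [exp_log hq] at this
  refine this.congr fun n => ?_
  rw [Function.comp_apply, rpow_def_of_pos (ha n), div_eq_mul_inv]

theorem prod_f_pow_inv_tendsto_four :
    Filter.Tendsto (fun n : ℕ => ((∏ r ∈ Finset.Icc 1 n, f r : ℚ) : ℝ) ^ ((n : ℝ)⁻¹))
      Filter.atTop (nhds 4) :=
  tendsto_rpow_inv_of_le_pow_mul_div_two (a := fun n => (fProd n : ℝ)) 2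
    (fun n => by exact_mod_cast fProd_pos n) four_pos
    (fun n => by exact_mod_cast fProd_le_mul_fProd_div_two n)
    (fun n => by exact_mod_cast four_pow_mul_fProd_div_two_le n)
end

section
/- For every positive integer n and every odd prime p, ∑_{r=1}^{n} v₂(r)·v_p(r) ≤ ∑_{r=1}^{n} v_p(r) − ⌊log n / log p⌋, where ⌊log n / log p⌋ is the largest exponent α with p^α ≤ n. -/
open Finset
open scoped Nat

/-! Since `v_p(r) = #{j ≥ 1 | p ^ j ∣ r}`, exchanging the order of summation and writing the
multiples of `p ^ j` up to `n` as `p ^ j * m` with `m ≤ n / p ^ j` gives the weighted Legendre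
formula `∑_{r ≤ n} v_p(r) f(r) = ∑_{j ≤ log_p n} ∑_{m ≤ n / p ^ j} f(p ^ j m)`.
For `f = 1` it yields `∑_{r ≤ n} v_p(r) = ∑_j ⌊n / p ^ j⌋`. For `f = v_q` with `q ≠ p` prime,
`v_q(p ^ j m) = v_q(m)`, so it yields `∑_j v_q(⌊n / p ^ j⌋!)`, and `v_q(N!) < N` for `N ≥ 1`
loses at least `1` for each of the `log_p n` values of `j`. -/

theorem sum_Icc_padicValNat_eq_factorial (q : ℕ) [Fact q.Prime] (N : ℕ) :
    ∑ m ∈ Icc 1 N, padicValNat q m = padicValNat q N ! := by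
  induction N with
  | zero => simp
  | succ N ih =>
    rw [sum_Icc_succ_top (by omega), ih, Nat.factorial_succ,
      padicValNat.mul N.succ_ne_zero N.factorial_ne_zero, add_comm]

theorem sum_Icc_filter_dvd {M : Type*} [AddCommMonoid M] (f : ℕ → M) (n : ℕ) {d : ℕ}
    (hd : 0 < d) :
    ∑ r ∈ Icc 1 n with d ∣ r, f r = ∑ m ∈ Icc 1 (n / d), f (d * m) := by
  have hmap : {r ∈ Icc 1 n | d ∣ r}
      = (Icc 1 (n / d)).map ⟨(d * ·), mul_right_injective₀ hd.ne'⟩ := by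
    ext r
    simp only [mem_filter, mem_Icc, mem_map, Function.Embedding.coeFn_mk]
    constructor
    · rintro ⟨⟨hr1, hrn⟩, m, rfl⟩
      refine ⟨m, ⟨Nat.pos_of_mul_pos_left hr1, ?_⟩, rfl⟩
      rwa [Nat.le_div_iff_mul_le hd, mul_comm]
    · rintro ⟨m, ⟨hm1, hmn⟩, rfl⟩
      refine ⟨⟨Nat.mul_pos hd hm1, ?_⟩, dvd_mul_right d m⟩
      rwa [Nat.le_div_iff_mul_le hd, mul_comm] at hmn
  rw [hmap, sum_map]
  rfl

theorem padicValNat_eq_card_pow_dvd {p r : ℕ} (hp : p.Prime) (hr : r ≠ 0) {n : ℕ}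
    (hrn : r ≤ n) :
    padicValNat p r = #{j ∈ Icc 1 (Nat.log p n) | p ^ j ∣ r} := by
  rw [← Nat.factorization_def r hp, ← Ico_add_one_right_eq_Icc,
    Nat.factorization_eq_card_pow_dvd_of_lt hp (Nat.pos_of_ne_zero hr)
      (hrn.trans_lt (Nat.lt_pow_succ_log_self hp.one_lt n))]
  rfl

theorem sum_Icc_padicValNat_smul {M : Type*} [AddCommMonoid M] {p : ℕ} (hp : p.Prime) (n : ℕ)
    (f : ℕ → M) :
    ∑ r ∈ Icc 1 n, padicValNat p r • f r
      = ∑ j ∈ Icc 1 (Nat.log p n), ∑ m ∈ Icc 1 (n / p ^ j), f (p ^ j * m) := by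
  calc ∑ r ∈ Icc 1 n, padicValNat p r • f r
      = ∑ r ∈ Icc 1 n, ∑ j ∈ Icc 1 (Nat.log p n), if p ^ j ∣ r then f r else 0 := by
        refine sum_congr rfl fun r hr => ?_
        rw [mem_Icc] at hr
        rw [padicValNat_eq_card_pow_dvd hp (by omega) hr.2, ← sum_const, sum_filter]
    _ = ∑ j ∈ Icc 1 (Nat.log p n), ∑ r ∈ Icc 1 n with p ^ j ∣ r, f r := by
        rw [sum_comm]
        simp only [sum_filter]
    _ = _ := sum_congr rfl fun j _ => sum_Icc_filter_dvd f n (pow_pos hp.pos j)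

theorem sum_Icc_padicValNat {p : ℕ} (hp : p.Prime) (n : ℕ) :
    ∑ r ∈ Icc 1 n, padicValNat p r = ∑ j ∈ Icc 1 (Nat.log p n), n / p ^ j := by
  simpa using sum_Icc_padicValNat_smul hp n (fun _ => (1 : ℕ))

theorem sum_Icc_padicValNat_mul_padicValNat {p q : ℕ} [Fact q.Prime] (hp : p.Prime)
    (hqp : q ≠ p) (n : ℕ) :
    ∑ r ∈ Icc 1 n, padicValNat q r * padicValNat p r
      = ∑ j ∈ Icc 1 (Nat.log p n), padicValNat q (n / p ^ j)! := by
  have := Fact.mk hp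
  simp_rw [mul_comm (padicValNat q _), ← smul_eq_mul, sum_Icc_padicValNat_smul hp,
    ← sum_Icc_padicValNat_eq_factorial]
  refine sum_congr rfl fun j _ => sum_congr rfl fun m hm => ?_
  rw [padicValNat.mul (pow_ne_zero j hp.ne_zero) (by rw [mem_Icc] at hm; omega),
    padicValNat_prime_prime_pow j hqp, zero_add]

theorem sum_Icc_padicValNat_mul_padicValNat_add_log_le {p q : ℕ} [Fact q.Prime] (hp : p.Prime)
    (hqp : q ≠ p) (n : ℕ) :
    ∑ r ∈ Icc 1 n, padicValNat q r * padicValNat p r + Nat.log p n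
      ≤ ∑ r ∈ Icc 1 n, padicValNat p r := by
  rw [sum_Icc_padicValNat_mul_padicValNat hp hqp, sum_Icc_padicValNat hp]
  calc ∑ j ∈ Icc 1 (Nat.log p n), padicValNat q (n / p ^ j)! + Nat.log p n
      = ∑ j ∈ Icc 1 (Nat.log p n), (padicValNat q (n / p ^ j)! + 1) := by
        rw [sum_add_distrib, sum_const, Nat.card_Icc, smul_eq_mul, mul_one, add_tsub_cancel_right]
    _ ≤ ∑ j ∈ Icc 1 (Nat.log p n), n / p ^ j := by
        refine sum_le_sum fun j hj => padicValNat_factorial_lt_of_ne_zero q ?_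
        rw [mem_Icc] at hj
        have hn : n ≠ 0 := by
          rintro rfl
          simp only [Nat.log_zero_right] at hj
          omega
        exact (Nat.div_pos (Nat.pow_le_of_le_log hn hj.2) (pow_pos hp.pos j)).ne'

theorem sum_v2_mul_vp_le_general (n p : ℕ) (hp : p.Prime) (hodd : Odd p) :
    (∑ r ∈ Finset.Icc 1 n, ((padicValNat 2 r : ℤ) * (padicValNat p r : ℤ)))
      ≤ (∑ r ∈ Finset.Icc 1 n, (padicValNat p r : ℤ)) - (Nat.log p n : ℤ) := by
  have h2p : 2 ≠ p := by
    rintro rfl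
    norm_num at hodd
  have key := Nat.cast_le (α := ℤ) |>.2 <|
    sum_Icc_padicValNat_mul_padicValNat_add_log_le hp h2p n
  simp only [Nat.cast_add, Nat.cast_sum, Nat.cast_mul] at key
  linarith

theorem sum_v2_mul_vp_le (n p : ℕ) (hn : 0 < n) (hp : p.Prime) (hodd : Odd p) :
    (∑ r ∈ Finset.Icc 1 n, ((padicValNat 2 r : ℤ) * (padicValNat p r : ℤ)))
      ≤ (∑ r ∈ Finset.Icc 1 n, (padicValNat p r : ℤ)) - (Nat.log p n : ℤ) :=
  sum_v2_mul_vp_le_general n p hp hodd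
end
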